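/- Let α₀ ∈ ℂ and define K₁ = q₁² p₁ + 3α₀ q₁ − q₂²/2 − p₂³/6 + p₁ p₂ and K₂ = p₁³/9 − (3α₀/2) q₂ p₂² + 3α₀² p₂ + α₀ p₁ q₂ + 3α₀ q₁ q₂² − (1/3) p₁² p₂² + (2/3) q₁ p₁² q₂ + (1/4) p₁ p₂⁴ + q₁² p₁ q₂² − q₁ p₁ q₂ p₂² as polynomial functions on ℂ⁴ (coordinates (q₁, p₁, q₂, p₂)). Then the Poisson bracket {K₁, K₂} := (∂K₁/∂p₁)(∂K₂/∂q₁) − (∂K₁/∂q₁)(∂K₂/∂p₁) + (∂K₁/∂p₂)(∂K₂/∂q₂) − (∂K₁/∂q₂)(∂K₂/∂p₂) vanishes identically on ℂ⁴; i.e., K₁ and K₂ Poisson-commute. -/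

import Mathlib

/-- The Hamiltonian `K₁` of the autonomous system (A1). -/
noncomputable def K1 (a0 q1 p1 q2 p2 : ℂ) : ℂ :=
  q1 ^ 2 * p1 + 3 * a0 * q1 - q2 ^ 2 / 2 - p2 ^ 3 / 6 + p1 * p2

/-- The Hamiltonian `K₂` of the autonomous system (A1). -/
noncomputable def K2 (a0 q1 p1 q2 p2 : ℂ) : ℂ :=
  p1 ^ 3 / 9 - (3 * a0 / 2) * q2 * p2 ^ 2 + 3 * a0 ^ 2 * p2 + a0 * p1 * q2
    + 3 * a0 * q1 * q2 ^ 2 - (1/3) * p1 ^ 2 * p2 ^ 2 + (2/3) * q1 * p1 ^ 2 * q2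
    + (1/4) * p1 * p2 ^ 4 + q1 ^ 2 * p1 * q2 ^ 2 - q1 * p1 * q2 * p2 ^ 2

section PartialDerivatives

variable (a0 q1 p1 q2 p2 : ℂ)

theorem deriv_K1_q1 : deriv (fun x => K1 a0 x p1 q2 p2) q1 = 2 * q1 * p1 + 3 * a0 := by
  simp (disch := fun_prop) [K1]

theorem deriv_K1_p1 : deriv (fun x => K1 a0 q1 x q2 p2) p1 = q1 ^ 2 + p2 := by
  simp (disch := fun_prop) [K1]

theorem deriv_K1_q2 : deriv (fun x => K1 a0 q1 p1 x p2) q2 = -q2 := by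
  simp (disch := fun_prop) [K1]
  ring

theorem deriv_K1_p2 : deriv (fun x => K1 a0 q1 p1 q2 x) p2 = p1 - p2 ^ 2 / 2 := by
  simp (disch := fun_prop) [K1]
  ring

theorem deriv_K2_q1 : deriv (fun x => K2 a0 x p1 q2 p2) q1 =
    3 * a0 * q2 ^ 2 + 2 / 3 * p1 ^ 2 * q2 + 2 * q1 * p1 * q2 ^ 2 - p1 * q2 * p2 ^ 2 := by
  simp (disch := fun_prop) [K2]

theorem deriv_K2_p1 : deriv (fun x => K2 a0 q1 x q2 p2) p1 =
    p1 ^ 2 / 3 + a0 * q2 - 2 / 3 * p1 * p2 ^ 2 + 4 / 3 * q1 * p1 * q2 + p2 ^ 4 / 4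
      + q1 ^ 2 * q2 ^ 2 - q1 * q2 * p2 ^ 2 := by
  simp (disch := fun_prop) [K2]
  ring

theorem deriv_K2_q2 : deriv (fun x => K2 a0 q1 p1 x p2) q2 =
    -(3 * a0 / 2 * p2 ^ 2) + a0 * p1 + 6 * a0 * q1 * q2 + 2 / 3 * q1 * p1 ^ 2
      + 2 * q1 ^ 2 * p1 * q2 - q1 * p1 * p2 ^ 2 := by
  simp (disch := fun_prop) [K2]
  ring

theorem deriv_K2_p2 : deriv (fun x => K2 a0 q1 p1 q2 x) p2 =
    -(3 * a0 * q2 * p2) + 3 * a0 ^ 2 - 2 / 3 * p1 ^ 2 * p2 + p1 * p2 ^ 3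
      - 2 * q1 * p1 * q2 * p2 := by
  simp (disch := fun_prop) [K2]
  ring

end PartialDerivatives

/-- The Poisson bracket
`{K₁,K₂} = (∂K₁/∂p₁)(∂K₂/∂q₁) - (∂K₁/∂q₁)(∂K₂/∂p₁)
 + (∂K₁/∂p₂)(∂K₂/∂q₂) - (∂K₁/∂q₂)(∂K₂/∂p₂)`
vanishes identically on `ℂ⁴`. -/
theorem stmt15 (a0 : ℂ) (q1 p1 q2 p2 : ℂ) :
    deriv (fun x => K1 a0 q1 x q2 p2) p1 * deriv (fun x => K2 a0 x p1 q2 p2) q1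
      - deriv (fun x => K1 a0 x p1 q2 p2) q1 * deriv (fun x => K2 a0 q1 x q2 p2) p1
      + deriv (fun x => K1 a0 q1 p1 q2 x) p2 * deriv (fun x => K2 a0 q1 p1 x p2) q2
      - deriv (fun x => K1 a0 q1 p1 x p2) q2 * deriv (fun x => K2 a0 q1 p1 q2 x) p2
      = 0 := by
  rw [deriv_K1_p1, deriv_K2_q1, deriv_K1_q1, deriv_K2_p1,
    deriv_K1_p2, deriv_K2_q2, deriv_K1_q2, deriv_K2_p2]
  ring
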